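/- arXiv:1406.5433 — 7 statements merged into one kernel-verified Lean document; each statement's English description precedes it below -/
import Mathlib

section
/- Let P be a multivariate polynomial in p variables with coefficients in 𝕂, say P = Σ_{α∈S} c_α X_1^{α_1}⋯X_p^{α_p} with finite support S ⊆ ℕ^p and c_α ≠ 0 for all α ∈ S. Let x ∈ 𝕂^p, and for α ∈ S set m(α) := val(c_α) + Σ_{i=1}^p α_i·val(x_i) ∈ ℝ∪{−∞} (with the conventions val(0) = −∞, (−∞)+r = −∞ and 0·(−∞) = 0). Suppose that max_{α∈S} m(α) is not −∞ and is attained at exactly one element α* ∈ S. Then P(x) ≠ 0, val(P(x)) = m(α*), and the leading coefficient of P(x) equals lc(c_{α*})·∏_{i=1}^p lc(x_i)^{α*_i}; in particular the sign of P(x) equals the sign of lc(c_{α*})·∏_{i=1}^p lc(x_i)^{α*_i}. -/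
/-- The field of generalized real Puiseux series: Hahn series over `ℝ`
whose exponent group is `ℝ` with the reversed order (so supports have a
largest real exponent). -/
abbrev PSeries : Type := HahnSeries ℝᵒᵈ ℝ

open Classical in
/-- The valuation of a generalized Puiseux series: its largest exponent,
with `val 0 = ⊥ = -∞`. -/
noncomputable def pval (x : PSeries) : WithBot ℝ :=
  if x = 0 then ⊥ else ((OrderDual.ofDual x.order : ℝ) : WithBot ℝ)

/-- The leading coefficient of a generalized Puiseux series: the coefficient
of `t ^ val x`. -/
noncomputable def plc (x : PSeries) : ℝ := x.coeff x.order

/-!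
The monomials of `P` evaluated at `x` are Hahn series whose valuations are exactly the tropical
values `m(α)`, since `val` and `lc` are multiplicative. A unique maximiser `α*` is therefore the
unique term of minimal `orderTop` (the exponent order of `𝕂` is reversed), and in a sum such a
strictly dominant term determines both the valuation and the leading coefficient.
-/

namespace WithBot

variable {α : Type*} [Add α]

def toDualAddEquiv : WithBot α ≃+ WithTop αᵒᵈ :=
  { WithBot.toDual with map_add' := by rintro (_ | a) (_ | b) <;> rfl }

@[simp]
theorem toDualAddEquiv_apply (a : WithBot α) : toDualAddEquiv a = WithBot.toDual a := rfl

end WithBot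

namespace HahnSeries

variable {Γ R ι : Type*}

section Multiplicative

variable [AddCommMonoid Γ] [LinearOrder Γ] [IsOrderedCancelAddMonoid Γ]
  [CommSemiring R] [NoZeroDivisors R]

noncomputable def leadingCoeffHom : R⟦Γ⟧ →* R where
  toFun := leadingCoeff
  map_one' := leadingCoeff_one
  map_mul' x y := leadingCoeff_mul x y

@[simp]
theorem leadingCoeffHom_apply (x : R⟦Γ⟧) : leadingCoeffHom x = x.leadingCoeff := rfl

theorem leadingCoeff_mul_prod_pow {σ : Type*} [Fintype σ] (c : R⟦Γ⟧) (x : σ → R⟦Γ⟧)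
    (n : σ → ℕ) :
    (c * ∏ i, x i ^ n i).leadingCoeff = c.leadingCoeff * ∏ i, (x i).leadingCoeff ^ n i := by
  simp only [← leadingCoeffHom_apply, map_mul, map_prod, map_pow]

variable [Nontrivial R]

theorem orderTop_prod (s : Finset ι) (f : ι → R⟦Γ⟧) :
    (∏ i ∈ s, f i).orderTop = ∑ i ∈ s, (f i).orderTop := by
  classical
  induction s using Finset.induction_on with
  | empty => simp
  | insert a s ha ih => rw [Finset.prod_insert ha, Finset.sum_insert ha, orderTop_mul, ih]

theorem orderTop_pow (x : R⟦Γ⟧) (n : ℕ) : (x ^ n).orderTop = n • x.orderTop := by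
  simpa using orderTop_prod (Finset.range n) fun _ ↦ x

theorem orderTop_mul_prod_pow {σ : Type*} [Fintype σ] (c : R⟦Γ⟧) (x : σ → R⟦Γ⟧) (n : σ → ℕ) :
    (c * ∏ i, x i ^ n i).orderTop = c.orderTop + ∑ i, n i • (x i).orderTop := by
  simp only [orderTop_mul, orderTop_prod, orderTop_pow]

end Multiplicative

section DominantTerm

variable [LinearOrder Γ] [AddCommMonoid R]

theorem lt_orderTop_sum {s : Finset ι} {f : ι → R⟦Γ⟧} {g : WithTop Γ} (hg : g ≠ ⊤)
    (hf : ∀ i ∈ s, g < (f i).orderTop) : g < (∑ i ∈ s, f i).orderTop := by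
  classical
  induction s using Finset.induction_on with
  | empty => simpa using hg.lt_top
  | insert a s ha ih =>
    rw [Finset.sum_insert ha]
    refine (lt_min (hf a (s.mem_insert_self a)) (ih ?_)).trans_le min_orderTop_le_orderTop_add
    exact fun i hi ↦ hf i (Finset.mem_insert_of_mem hi)

variable [DecidableEq ι] {s : Finset ι} {f : ι → R⟦Γ⟧} {j : ι}

theorem orderTop_lt_orderTop_sum_erase (hj : f j ≠ 0)
    (hf : ∀ i ∈ s, i ≠ j → (f j).orderTop < (f i).orderTop) :
    (f j).orderTop < (∑ i ∈ s.erase j, f i).orderTop :=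
  lt_orderTop_sum (orderTop_ne_top.2 hj) fun i hi ↦
    hf i (Finset.mem_of_mem_erase hi) (Finset.ne_of_mem_erase hi)

theorem orderTop_sum_eq_of_lt (hjs : j ∈ s) (hj : f j ≠ 0)
    (hf : ∀ i ∈ s, i ≠ j → (f j).orderTop < (f i).orderTop) :
    (∑ i ∈ s, f i).orderTop = (f j).orderTop := by
  rw [← Finset.add_sum_erase s f hjs]
  exact orderTop_add_eq_left (orderTop_lt_orderTop_sum_erase hj hf)

theorem leadingCoeff_sum_eq_of_lt (hjs : j ∈ s) (hj : f j ≠ 0)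
    (hf : ∀ i ∈ s, i ≠ j → (f j).orderTop < (f i).orderTop) :
    (∑ i ∈ s, f i).leadingCoeff = (f j).leadingCoeff := by
  rw [← Finset.add_sum_erase s f hjs]
  exact leadingCoeff_add_eq_left (orderTop_lt_orderTop_sum_erase hj hf)

end DominantTerm

end HahnSeries

open HahnSeries

theorem toDual_pval (x : PSeries) : WithBot.toDual (pval x) = x.orderTop := by
  by_cases hx : x = 0
  · simp [hx, pval]
  · rw [pval, if_neg hx, orderTop_of_ne_zero hx, order_of_ne hx]
    rfl

theorem plc_eq_leadingCoeff (x : PSeries) : plc x = x.leadingCoeff :=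
  leadingCoeff_eq.symm

theorem toDual_pval_add_sum_nsmul {σ : Type*} [Fintype σ] (c : PSeries) (x : σ → PSeries)
    (n : σ → ℕ) :
    WithBot.toDual (pval c + ∑ i, n i • pval (x i)) = (c * ∏ i, x i ^ n i).orderTop := by
  rw [orderTop_mul_prod_pow, ← WithBot.toDualAddEquiv_apply, map_add, map_sum]
  simp only [map_nsmul, WithBot.toDualAddEquiv_apply, toDual_pval]

/-- if the tropical evaluation `m(α) = val(c_α) + ∑ i, α i • val (x i)`
over the support of a multivariate polynomial `P` attains its maximum, which is not `-∞`,
at a unique exponent `α*`, then `P x ≠ 0`, `val (P x) = m α*`, the leading coefficient of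
`P x` is `lc (c_{α*}) * ∏ i, lc (x i) ^ α* i`, and in particular the signs agree. -/
theorem stmt0 {p : ℕ} (P : MvPolynomial (Fin p) PSeries) (x : Fin p → PSeries)
    (αstar : Fin p →₀ ℕ) (hmem : αstar ∈ P.support)
    (hne : pval (P.coeff αstar) + ∑ i, (αstar i) • pval (x i) ≠ ⊥)
    (hmax : ∀ α ∈ P.support, α ≠ αstar →
      pval (P.coeff α) + ∑ i, (α i) • pval (x i) <
        pval (P.coeff αstar) + ∑ i, (αstar i) • pval (x i)) :
    MvPolynomial.eval x P ≠ 0 ∧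
    pval (MvPolynomial.eval x P)
      = pval (P.coeff αstar) + ∑ i, (αstar i) • pval (x i) ∧
    plc (MvPolynomial.eval x P) = plc (P.coeff αstar) * ∏ i, plc (x i) ^ (αstar i) ∧
    Real.sign (plc (MvPolynomial.eval x P))
      = Real.sign (plc (P.coeff αstar) * ∏ i, plc (x i) ^ (αstar i)) := by
  set term : (Fin p →₀ ℕ) → PSeries := fun α ↦ P.coeff α * ∏ i, x i ^ α i
  have heval : MvPolynomial.eval x P = ∑ α ∈ P.support, term α := MvPolynomial.eval_eq' x P
  have hstar : term αstar ≠ 0 := by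
    rw [← orderTop_ne_top, ← toDual_pval_add_sum_nsmul]
    exact WithBot.toDual.injective.ne hne
  have hdom : ∀ α ∈ P.support, α ≠ αstar → (term αstar).orderTop < (term α).orderTop :=
    fun α hα hα' ↦ by
      rw [← toDual_pval_add_sum_nsmul, ← toDual_pval_add_sum_nsmul]
      exact WithBot.toDual_lt_toDual_iff.2 (hmax α hα hα')
  have horder : (MvPolynomial.eval x P).orderTop = (term αstar).orderTop := by
    rw [heval, orderTop_sum_eq_of_lt hmem hstar hdom]
  have hlc : plc (MvPolynomial.eval x P) = plc (P.coeff αstar) * ∏ i, plc (x i) ^ (αstar i) := by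
    simp only [plc_eq_leadingCoeff]
    rw [heval, leadingCoeff_sum_eq_of_lt hmem hstar hdom, leadingCoeff_mul_prod_pow]
  refine ⟨orderTop_ne_top.1 (horder ▸ orderTop_ne_top.2 hstar), ?_, hlc, by rw [hlc]⟩
  exact WithBot.toDual.injective (by rw [toDual_pval, horder, toDual_pval_add_sum_nsmul])
end

section
/- Let 𝐌 be an m×n matrix with entries in 𝕂 and set v_{ij} := val(𝐌_{ij}) ∈ ℝ∪{−∞}. Suppose that for every pair of subsets K ⊆ {1,…,m} and L ⊆ {1,…,n} with |K| = |L|, the maximum over all bijections σ : K → L of Σ_{k∈K} v_{k σ(k)} is not −∞ and is attained at exactly one bijection. Then every square submatrix of 𝐌 has nonzero determinant, i.e., no minor of 𝐌 is null. -/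
/-!
Expand the determinant over permutations: the term of `τ` has valuation
`∑ i, v (A i (τ i))`, since signs are units of valuation `0`. If one permutation
strictly beats all others, the ultrametric inequality gives `v A.det` equal to its
(finite) value, so `A.det ≠ 0`. The valuation `pval` is Mathlib's `HahnSeries.addVal`
read through the order-reversing identification `WithTop ℝᵒᵈ ≃ WithBot ℝ`, which turns
the maximum of the statement into the minimum of valuation theory.
-/

open Equiv

namespace AddValuation

variable {R Γ₀ : Type*} [CommRing R] [LinearOrderedAddCommMonoidWithTop Γ₀]
  (v : AddValuation R Γ₀)

theorem map_prod {ι : Type*} (s : Finset ι) (f : ι → R) :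
    v (∏ i ∈ s, f i) = ∑ i ∈ s, v (f i) := by
  induction s using Finset.cons_induction with
  | empty => simp
  | cons a s ha ih => simp [Finset.prod_cons, Finset.sum_cons, ih]

theorem map_units_int_smul (u : ℤˣ) (x : R) : v (u • x) = v x := by
  rcases Int.units_eq_one_or u with rfl | rfl <;> simp

variable {ι : Type*} [Fintype ι]

theorem map_det_of_unique_min [DecidableEq ι] (A : Matrix ι ι R) (σ : Perm ι)
    (hσ : ∑ i, v (A i (σ i)) ≠ ⊤)
    (hmin : ∀ τ : Perm ι, τ ≠ σ → ∑ i, v (A i (σ i)) < ∑ i, v (A i (τ i))) :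
    v A.det = ∑ i, v (A i (σ i)) := by
  have hterm (τ : Perm ι) : v (Perm.sign τ • ∏ i, A i (τ i)) = ∑ i, v (A i (τ i)) := by
    rw [map_units_int_smul, map_prod]
  rw [← Matrix.det_transpose, Matrix.det_apply, ← Finset.add_sum_erase _ _ (Finset.mem_univ σ)]
  simp only [Matrix.transpose_apply]
  rw [map_add_eq_of_lt_left, hterm]
  refine map_lt_sum _ (by rwa [hterm]) fun τ hτ => ?_
  rw [hterm, hterm]
  exact hmin τ (Finset.ne_of_mem_erase hτ)

theorem det_ne_zero_of_unique_min [DecidableEq ι] (A : Matrix ι ι R) (σ : Perm ι)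
    (hσ : ∑ i, v (A i (σ i)) ≠ ⊤)
    (hmin : ∀ τ : Perm ι, τ ≠ σ → ∑ i, v (A i (σ i)) < ∑ i, v (A i (τ i))) :
    A.det ≠ 0 := fun h => hσ <| by
  rw [← v.map_det_of_unique_min A σ hσ hmin, h, map_zero]

theorem det_submatrix_ne_zero_of_unique_min {κ ρ : Type*} [Fintype ρ] [DecidableEq ρ]
    (M : Matrix ι κ R) (e₁ : ρ ≃ ι) (e₂ : ρ ≃ κ) (σ : ι ≃ κ)
    (hσ : ∑ i, v (M i (σ i)) ≠ ⊤)
    (hmin : ∀ τ : ι ≃ κ, τ ≠ σ → ∑ i, v (M i (σ i)) < ∑ i, v (M i (τ i))) :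
    (M.submatrix e₁ e₂).det ≠ 0 := by
  set Φ := e₁.equivCongr e₂
  have hsum : ∀ π : Perm ρ, ∑ a, v (M.submatrix e₁ e₂ a (π a)) = ∑ i, v (M i (Φ π i)) :=
    fun π => by simpa [Φ] using e₁.sum_comp fun i => v (M i (Φ π i))
  refine v.det_ne_zero_of_unique_min _ (Φ.symm σ) ?_ fun π hπ => ?_
  · rwa [hsum, Φ.apply_symm_apply]
  · rw [hsum, hsum, Φ.apply_symm_apply]
    exact hmin _ fun h => hπ (Φ.eq_symm_apply.mpr h)

end AddValuation

theorem pval_eq_ofDual_addVal (x : PSeries) :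
    pval x = WithTop.ofDual (HahnSeries.addVal ℝᵒᵈ ℝ x) := by
  by_cases hx : x = 0
  · simp [pval, hx]
  · simp [pval, hx, HahnSeries.addVal_apply_of_ne hx]

theorem sum_pval_eq_ofDual {ι : Type*} (s : Finset ι) (f : ι → PSeries) :
    ∑ i ∈ s, pval (f i) = WithTop.ofDual (∑ i ∈ s, HahnSeries.addVal ℝᵒᵈ ℝ (f i)) := by
  simp only [pval_eq_ofDual_addVal]
  rfl -- addition on `WithTop ℝᵒᵈ` and on `WithBot ℝ` is the same `Option` addition

/-- if for every pair of equal-cardinality subsets `K`, `L` of the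
row and column indices the assignment maximum `max_σ ∑_{k ∈ K} val (M k (σ k))`
over bijections `σ : K → L` is not `-∞` and is attained at a unique bijection,
then every square submatrix of `M` has nonzero determinant. -/
theorem stmt2 {m n : ℕ} (M : Matrix (Fin m) (Fin n) PSeries)
    (h : ∀ (K : Finset (Fin m)) (L : Finset (Fin n)), K.card = L.card →
      ∃ σ : {i // i ∈ K} ≃ {j // j ∈ L},
        (∑ k : {i // i ∈ K}, pval (M k.1 (σ k).1)) ≠ ⊥ ∧
        ∀ τ : {i // i ∈ K} ≃ {j // j ∈ L}, τ ≠ σ →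
          ∑ k : {i // i ∈ K}, pval (M k.1 (τ k).1) <
            ∑ k : {i // i ∈ K}, pval (M k.1 (σ k).1)) :
    ∀ (K : Finset (Fin m)) (L : Finset (Fin n)) (hKL : K.card = L.card),
      (M.submatrix
        (fun a : Fin K.card => ((K.orderIsoOfFin rfl a : {i // i ∈ K}) : Fin m))
        (fun b : Fin K.card =>
          ((L.orderIsoOfFin hKL.symm b : {j // j ∈ L}) : Fin n))).det ≠ 0 := by
  intro K L hKL
  obtain ⟨σ, hσ, hmax⟩ := h K L hKL
  refine (HahnSeries.addVal ℝᵒᵈ ℝ).det_submatrix_ne_zero_of_unique_min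
    (M.submatrix Subtype.val Subtype.val) (K.orderIsoOfFin rfl).toEquiv
    (L.orderIsoOfFin hKL.symm).toEquiv σ ?_ fun τ hτ => ?_
  · exact fun htop => hσ (by rw [sum_pval_eq_ofDual]; exact congrArg WithTop.ofDual htop)
  · have := hmax τ hτ
    rwa [sum_pval_eq_ofDual, sum_pval_eq_ofDual, WithTop.ofDual_lt_ofDual_iff] at this
end

section
/- Let F be a field, A an m×n matrix over F, I ⊆ {1,…,m} and J ⊆ {1,…,n} with |I| + |J| = n, and let J̄ := {1,…,n}∖J (so |J̄| = |I|). Let u ∈ F^n, and let y be a vector indexed by I ⊎ J satisfying: for every j ∈ J, y_j + Σ_{i∈I} A_{ij} y_i = u_j, and for every j ∈ J̄, Σ_{i∈I} A_{ij} y_i = u_j. Then for every j ∈ J there exists a sign s ∈ {+1, −1}, depending only on j, I and J, such that y_j · det(A_{I×J̄}) = s · det(M_j), where M_j is the (|I|+1)×(|I|+1) matrix whose first |I| rows are the rows of A indexed by I restricted to the columns in J̄∪{j} (taken in increasing order of index), and whose last row is (u_l)_{l∈J̄∪{j}}. -/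
/-!
Expanding `det M_j` along its last row makes it a linear form in that row, and this form vanishes
on every row of `A_{I×(J̄∪{j})}`, since it then computes the determinant of a matrix with two
equal rows. The hypotheses on `y` say that the last row `u` is `y_j` times the unit vector at the
position `p` of `j` in `J̄ ∪ {j}` plus a combination of these rows, so
`det M_j = (-1)^(|I|+p) y_j det A_{I×J̄}`.
-/

open Finset Matrix

namespace Finset

variable {α : Type*} [LinearOrder α]

theorem sum_orderEmbOfFin {M : Type*} [AddCommMonoid M] (s : Finset α) {k : ℕ}
    (h : s.card = k) (f : α → M) :
    ∑ a : Fin k, f (s.orderEmbOfFin h a) = ∑ x ∈ s, f x := by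
  simp only [← coe_orderIsoOfFin_apply, ← sum_coe_sort s f]
  exact (s.orderIsoOfFin h).toEquiv.sum_comp (fun x : s => f x)

theorem orderEmbOfFin_insert_succAbove {s : Finset α} {j : α} {k : ℕ} (hs : s.card = k)
    (h : (insert j s).card = k + 1) {p : Fin (k + 1)}
    (hp : (insert j s).orderEmbOfFin h p = j) (b : Fin k) :
    (insert j s).orderEmbOfFin h (p.succAbove b) = s.orderEmbOfFin hs b := by
  have hmem : ∀ b, (insert j s).orderEmbOfFin h (p.succAbove b) ∈ s := fun b =>
    mem_of_mem_insert_of_ne (orderEmbOfFin_mem _ h _) fun hj =>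
      Fin.succAbove_ne p b ((insert j s).orderEmbOfFin h |>.injective (hj.trans hp.symm))
  exact congrFun (orderEmbOfFin_unique hs hmem
    (((insert j s).orderEmbOfFin h).strictMono.comp (Fin.strictMono_succAbove p))) b

end Finset

namespace Matrix

variable {R : Type*} [CommRing R] {k : ℕ}

def snocRow (B : Matrix (Fin k) (Fin (k + 1)) R) (v : Fin (k + 1) → R) :
    Matrix (Fin (k + 1)) (Fin (k + 1)) R :=
  of fun a b => if h : (a : ℕ) < k then B ⟨a, h⟩ b else v b

theorem det_snocRow (B : Matrix (Fin k) (Fin (k + 1)) R) (v : Fin (k + 1) → R) :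
    (snocRow B v).det =
      ∑ b, v b * ((-1) ^ (k + (b : ℕ)) * (B.submatrix id b.succAbove).det) := by
  rw [det_succ_row _ (Fin.last k)]
  refine sum_congr rfl fun b _ => ?_
  have hminor : (snocRow B v).submatrix (Fin.last k).succAbove b.succAbove =
      B.submatrix id b.succAbove := by
    ext a c
    simp [snocRow, a.isLt]
  rw [hminor, Fin.val_last]
  simp only [snocRow, of_apply, Fin.val_last, lt_self_iff_false, ↓reduceDIte]
  ring

theorem det_snocRow_self (B : Matrix (Fin k) (Fin (k + 1)) R) (a : Fin k) :
    (snocRow B (B a)).det = 0 :=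
  det_zero_of_row_eq (Fin.castSucc_lt_last a).ne (funext fun b => by simp [snocRow, a.isLt])

theorem det_snocRow_smul_single_add_sum (B : Matrix (Fin k) (Fin (k + 1)) R) (c : R)
    (p : Fin (k + 1)) (z : Fin k → R) :
    (snocRow B (c • Pi.single p 1 + ∑ a, z a • B a)).det =
      (-1) ^ (k + (p : ℕ)) * c * (B.submatrix id p.succAbove).det := by
  have hrows : ∀ a, ∑ b, B a b * ((-1) ^ (k + (b : ℕ)) * (B.submatrix id b.succAbove).det) = 0 :=
    fun a => (det_snocRow B (B a)).symm.trans (det_snocRow_self B a)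
  simp only [det_snocRow, Pi.add_apply, Pi.smul_apply, Finset.sum_apply, add_mul, sum_add_distrib,
    sum_mul, smul_eq_mul]
  rw [sum_comm]
  simp only [mul_assoc, ← mul_sum, hrows, mul_zero, sum_const_zero, add_zero]
  rw [sum_eq_single p (fun b _ hb => by simp [hb]) (by simp)]
  simp only [Pi.single_eq_same]
  ring

end Matrix

/-- let `A` be an `m × n` matrix over a field, `I ⊆ [m]`, `J ⊆ [n]` with
`|I| + |J| = n`, and `J̄ = [n] ∖ J`. If `y` (indexed by `I ⊎ J`) satisfies
`y_j + ∑_{i ∈ I} A_{ij} y_i = u_j` for `j ∈ J` and `∑_{i ∈ I} A_{ij} y_i = u_j` for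
`j ∈ J̄`, then for every `j ∈ J` there is a sign `s ∈ {1, -1}` with
`y_j * det (A_{I × J̄}) = s * det M_j`, where the first `|I|` rows of `M_j` are the rows
of `A` indexed by `I` restricted to the columns of `J̄ ∪ {j}` (in increasing order), and
its last row is `(u_l)_{l ∈ J̄ ∪ {j}}`. -/
theorem stmt4 {F : Type*} [Field F] {m n : ℕ} (A : Matrix (Fin m) (Fin n) F)
    (I : Finset (Fin m)) (J : Finset (Fin n)) (hIJ : I.card + J.card = n)
    (u : Fin n → F) (y : Fin m ⊕ Fin n → F)
    (hy1 : ∀ j ∈ J, y (Sum.inr j) + ∑ i ∈ I, A i j * y (Sum.inl i) = u j)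
    (hy2 : ∀ j ∈ Jᶜ, ∑ i ∈ I, A i j * y (Sum.inl i) = u j) :
    ∀ j, ∀ hj : j ∈ J, ∃ s : F, (s = 1 ∨ s = -1) ∧
      y (Sum.inr j) *
        (A.submatrix
          (fun a : Fin I.card => ((I.orderIsoOfFin rfl a : {r // r ∈ I}) : Fin m))
          (fun b : Fin I.card =>
            ((Jᶜ.orderIsoOfFin
              (by rw [Finset.card_compl, Fintype.card_fin]; omega) b :
                {c // c ∈ Jᶜ}) : Fin n))).det
      = s * (Matrix.of (fun a b : Fin (I.card + 1) =>
          if h : (a : ℕ) < I.card then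
            A ((I.orderIsoOfFin rfl ⟨(a : ℕ), h⟩ : {r // r ∈ I}) : Fin m)
              (((insert j Jᶜ).orderIsoOfFin
                  (by
                    rw [Finset.card_insert_of_notMem (by simpa using hj),
                      Finset.card_compl, Fintype.card_fin]
                    omega) b :
                    {c // c ∈ insert j Jᶜ}) : Fin n)
          else
            u (((insert j Jᶜ).orderIsoOfFin
                  (by
                    rw [Finset.card_insert_of_notMem (by simpa using hj),
                      Finset.card_compl, Fintype.card_fin]
                    omega) b :
                    {c // c ∈ insert j Jᶜ}) : Fin n))).det := by
  intro j hj
  have hcard : Jᶜ.card = I.card := by rw [card_compl, Fintype.card_fin]; omega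
  have hcard' : (insert j Jᶜ).card = I.card + 1 := by
    rw [card_insert_of_notMem (by simpa using hj), hcard]
  simp only [coe_orderIsoOfFin_apply]
  set e := (insert j Jᶜ).orderEmbOfFin hcard'
  obtain ⟨p, hp⟩ : ∃ p, e p = j := by
    obtain ⟨p, hp⟩ := ((insert j Jᶜ).orderIsoOfFin hcard').surjective ⟨j, mem_insert_self j Jᶜ⟩
    exact ⟨p, by rw [← coe_orderIsoOfFin_apply, hp]⟩
  set B : Matrix (Fin I.card) (Fin (I.card + 1)) F := of fun a b => A (I.orderEmbOfFin rfl a) (e b)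
  have hu : (fun b => u (e b)) =
      y (.inr j) • Pi.single p 1 + ∑ a, y (.inl (I.orderEmbOfFin rfl a)) • B a := by
    funext b
    simp only [B, Pi.add_apply, Pi.smul_apply, Finset.sum_apply, of_apply, smul_eq_mul,
      mul_comm (y _), sum_orderEmbOfFin I rfl (fun i => A i (e b) * y (.inl i))]
    rcases Fin.eq_self_or_eq_succAbove p b with rfl | ⟨b, rfl⟩
    · rw [Pi.single_eq_same, one_mul, hp, hy1 j hj]
    · rw [Pi.single_eq_of_ne (Fin.succAbove_ne p b), zero_mul, zero_add,
        orderEmbOfFin_insert_succAbove hcard hcard' hp, hy2 _ (orderEmbOfFin_mem _ _ _)]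
  refine ⟨(-1) ^ (I.card + (p : ℕ)), neg_one_pow_eq_or F _, ?_⟩
  change _ = _ * (snocRow B (fun b => u (e b))).det
  have hminor : B.submatrix id p.succAbove =
      A.submatrix (I.orderEmbOfFin rfl) (Jᶜ.orderEmbOfFin hcard) := by
    ext a b
    exact congrArg (A _) (orderEmbOfFin_insert_succAbove hcard hcard' hp b)
  rw [hu, det_snocRow_smul_single_add_sum, hminor, ← mul_assoc, ← mul_assoc, ← pow_add,
    Even.neg_one_pow ⟨_, rfl⟩, one_mul]
end

section
/- Let R be an integral domain, σ a finite type, and let P and Q be nonzero multivariate polynomials in the variables indexed by σ with coefficients in R. Define the Newton polytope of a nonzero polynomial as the convex hull in ℝ^σ of its support, i.e., of the set of its exponent vectors regarded as points of ℝ^σ. Then the Newton polytope of the product P·Q equals the Minkowski sum of the Newton polytope of P and the Newton polytope of Q. -/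
open scoped Pointwise

/-- The Newton polytope of a multivariate polynomial: the convex hull in `ℝ^σ`
of its support (the set of its exponent vectors, regarded as points of `ℝ^σ`). -/
noncomputable def newtonPolytope {R σ : Type*} [CommSemiring R]
    (P : MvPolynomial σ R) : Set (σ → ℝ) :=
  convexHull ℝ ((fun α : σ →₀ ℕ => fun s => (α s : ℝ)) '' (P.support : Set (σ →₀ ℕ)))

/-!
Every exponent of `P * Q` is a sum of exponents of `P` and `Q`, which gives
`new(P * Q) ⊆ new(P) + new(Q)`. Conversely, `new(P) + new(Q)` is the convex hull of the finite
set `supp P + supp Q`, so by Krein–Milman it is the closed convex hull of its extreme points. An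
extreme point `α + β` has only one decomposition as an exponent of `P` plus an exponent of `Q`,
so the coefficient of `X^(α + β)` in `P * Q` is a product of two nonzero coefficients, which is
nonzero over a domain.
-/

section ExtremePoints

variable {𝕜 E : Type*} [Field 𝕜] [LinearOrder 𝕜] [IsStrictOrderedRing 𝕜] [AddCommGroup E]
  [Module 𝕜 E]

/-- If `a + b = a' + b'` were a second decomposition of the extreme point `a + b`, then
`a + b` would be the midpoint of `a + b'` and `a' + b`, both in the hull. -/
theorem exists_unique_add_of_mem_extremePoints_convexHull_add {A B : Set E} {v : E}
    (hv : v ∈ (convexHull 𝕜 (A + B)).extremePoints 𝕜) :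
    ∃ a ∈ A, ∃ b ∈ B, a + b = v ∧ ∀ a' ∈ A, ∀ b' ∈ B, a' + b' = v → a' = a ∧ b' = b := by
  obtain ⟨a, ha, b, hb, rfl⟩ := extremePoints_convexHull_subset hv
  refine ⟨a, ha, b, hb, rfl, fun a' ha' b' hb' hab' => ?_⟩
  have hmid : a + b ∈ openSegment 𝕜 (a + b') (a' + b) :=
    ⟨1 / 2, 1 / 2, by norm_num, by norm_num, by norm_num, by
      linear_combination (norm := module) (1 / 2 : 𝕜) • hab'⟩
  obtain ⟨h₁, h₂⟩ := (mem_extremePoints.1 hv).2 _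
    (subset_convexHull 𝕜 _ (Set.add_mem_add ha hb')) _
    (subset_convexHull 𝕜 _ (Set.add_mem_add ha' hb)) hmid
  exact ⟨add_right_cancel h₂, add_left_cancel h₁⟩

end ExtremePoints

theorem IsCompact.subset_of_extremePoints_subset {E : Type*} [AddCommGroup E] [Module ℝ E]
    [TopologicalSpace E] [T2Space E] [IsTopologicalAddGroup E] [ContinuousSMul ℝ E]
    [LocallyConvexSpace ℝ E] {K C : Set E} (hK : IsCompact K) (hKconv : Convex ℝ K)
    (hC : IsClosed C) (hCconv : Convex ℝ C) (hKC : K.extremePoints ℝ ⊆ C) : K ⊆ C := by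
  rw [← closure_convexHull_extremePoints hK hKconv]
  exact closure_minimal (convexHull_min hKC hCconv) hC

namespace MvPolynomial

variable {R σ : Type*} [CommSemiring R]

theorem mem_support_mul_of_uniqueAdd [NoZeroDivisors R] {P Q : MvPolynomial σ R}
    {α β : σ →₀ ℕ} (hα : α ∈ P.support) (hβ : β ∈ Q.support)
    (h : UniqueAdd P.support Q.support α β) : α + β ∈ (P * Q).support := by
  rw [mem_support_iff] at hα hβ ⊢
  rw [coeff, AddMonoidAlgebra.coeff_mul_add_of_uniqueAdd h]
  exact mul_ne_zero hα hβ

variable (σ) in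
def exponentToReal : (σ →₀ ℕ) →+ (σ → ℝ) where
  toFun α s := α s
  map_zero' := by ext; simp
  map_add' _ _ := by ext; simp

theorem exponentToReal_injective : Function.Injective (exponentToReal σ) :=
  fun _ _ h => Finsupp.ext fun s => Nat.cast_injective (R := ℝ) (congrFun h s)

theorem newtonPolytope_eq (P : MvPolynomial σ R) :
    newtonPolytope P = convexHull ℝ (exponentToReal σ '' P.support) :=
  rfl

theorem isCompact_newtonPolytope (P : MvPolynomial σ R) : IsCompact (newtonPolytope P) :=
  (P.support.finite_toSet.image _).isCompact_convexHull ℝ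

theorem newtonPolytope_mul_subset (P Q : MvPolynomial σ R) :
    newtonPolytope (P * Q) ⊆ newtonPolytope P + newtonPolytope Q := by
  classical
  simp only [newtonPolytope_eq, ← convexHull_add, ← Set.image_add, ← Finset.coe_add]
  exact convexHull_mono (Set.image_mono (Finset.coe_subset.2 (support_mul P Q)))

theorem extremePoints_add_newtonPolytope_subset [NoZeroDivisors R] (P Q : MvPolynomial σ R) :
    (newtonPolytope P + newtonPolytope Q).extremePoints ℝ ⊆ newtonPolytope (P * Q) := by
  rw [newtonPolytope_eq, newtonPolytope_eq, ← convexHull_add]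
  intro v hv
  obtain ⟨_, ⟨α, hα, rfl⟩, _, ⟨β, hβ, rfl⟩, rfl, huniq⟩ :=
    exists_unique_add_of_mem_extremePoints_convexHull_add hv
  have hαβ : UniqueAdd P.support Q.support α β := fun α' β' hα' hβ' h => by
    have := huniq _ ⟨α', hα', rfl⟩ _ ⟨β', hβ', rfl⟩ (by rw [← map_add, h, map_add])
    exact ⟨exponentToReal_injective this.1, exponentToReal_injective this.2⟩
  rw [← map_add]
  exact subset_convexHull ℝ _ ⟨α + β, mem_support_mul_of_uniqueAdd hα hβ hαβ, rfl⟩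

theorem add_newtonPolytope_subset [NoZeroDivisors R] (P Q : MvPolynomial σ R) :
    newtonPolytope P + newtonPolytope Q ⊆ newtonPolytope (P * Q) :=
  ((isCompact_newtonPolytope P).add (isCompact_newtonPolytope Q)).subset_of_extremePoints_subset
    ((convex_convexHull ℝ _).add (convex_convexHull ℝ _)) (isCompact_newtonPolytope _).isClosed
    (convex_convexHull ℝ _) (extremePoints_add_newtonPolytope_subset P Q)

end MvPolynomial

theorem stmt6_general {R σ : Type*} [CommRing R] [IsDomain R]
    (P Q : MvPolynomial σ R) :
    newtonPolytope (P * Q) = newtonPolytope P + newtonPolytope Q :=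
  (MvPolynomial.newtonPolytope_mul_subset P Q).antisymm
    (MvPolynomial.add_newtonPolytope_subset P Q)

/-- over an integral domain, the Newton polytope of a product of two
nonzero multivariate polynomials equals the Minkowski sum of their Newton polytopes. -/
theorem stmt6 {R σ : Type*} [CommRing R] [IsDomain R] [Finite σ]
    (P Q : MvPolynomial σ R) (hP : P ≠ 0) (hQ : Q ≠ 0) :
    newtonPolytope (P * Q) = newtonPolytope P + newtonPolytope Q :=
  stmt6_general P Q
end

section
/- Let A be an m×n matrix with real entries such that for every pair of subsets K ⊆ {1,…,m} and L ⊆ {1,…,n} with |K| = |L|, the maximum over all bijections σ : K → L of Σ_{k∈K} A_{kσ(k)} is attained at exactly one bijection. Let ε be a real number with ε < n·(min_{i,j} A_{ij} − max_{i,j} A_{ij}), and let B be the (m+1)×n real matrix whose first m rows are those of A and whose last row is (ε, 2ε, …, nε). Then for every pair of subsets K ⊆ {1,…,m+1} and L ⊆ {1,…,n} with |K| = |L|, the maximum over all bijections σ : K → L of Σ_{k∈K} B_{kσ(k)} is attained at exactly one bijection. -/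
/-!
Appending the row `(ε, 2ε, …, nε)` with `ε < 0` makes the new row strictly prefer small columns:
in an assignment problem `K × L` containing it, sending it anywhere but `min L` costs at least
`-ε`, whereas rearranging the other (fewer than `n`) rows gains at most `n (max A - min A) < -ε`.
So every candidate optimum sends the new row to `min L`, and uniqueness reduces to the problem
for `A` on the remaining rows and columns `L \ {min L}`.
-/

/-- A real matrix is strongly non-degenerate (in the tropical sense) when, for every
pair of equal-cardinality subsets `K` of its row indices and `L` of its column indices,
the assignment maximum `max {∑_{k ∈ K} M_{k σ(k)} : σ a bijection from K to L}` is
attained by exactly one bijection. -/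
def StronglyNonDegenerate {m n : ℕ} (M : Matrix (Fin m) (Fin n) ℝ) : Prop :=
  ∀ (K : Finset (Fin m)) (L : Finset (Fin n)), K.card = L.card →
    ∃ σ : {i // i ∈ K} ≃ {j // j ∈ L},
      ∀ τ : {i // i ∈ K} ≃ {j // j ∈ L}, τ ≠ σ →
        ∑ k : {i // i ∈ K}, M k.1 (τ k).1 < ∑ k : {i // i ∈ K}, M k.1 (σ k).1

open Finset

section Assignment

variable {α β α' β' : Type*} [Fintype α] [Fintype α']

def HasUniqueOptimalAssignment (w : α → β → ℝ) : Prop :=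
  ∃ σ : α ≃ β, ∀ τ : α ≃ β, τ ≠ σ → ∑ a, w a (τ a) < ∑ a, w a (σ a)

theorem HasUniqueOptimalAssignment.of_equiv {w : α → β → ℝ} {w' : α' → β' → ℝ}
    (h : HasUniqueOptimalAssignment w) (e : α ≃ α') (f : β ≃ β')
    (hw : ∀ a b, w' (e a) (f b) = w a b) : HasUniqueOptimalAssignment w' := by
  obtain ⟨σ, hσ⟩ := h
  set Φ := e.equivCongr f
  have hsum : ∀ τ : α ≃ β, ∑ a', w' a' (Φ τ a') = ∑ a, w a (τ a) := fun τ => by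
    rw [← e.sum_comp]
    simp [Φ, hw]
  refine ⟨Φ σ, fun τ' hτ' => ?_⟩
  rw [← Φ.apply_symm_apply τ', hsum, hsum]
  exact hσ _ fun h => hτ' (by rw [← h, Φ.apply_symm_apply])

variable [DecidableEq α]

theorem HasUniqueOptimalAssignment.of_subtype_ne [DecidableEq β] {w : α → β → ℝ}
    (r : α) (c : β)
    (hgap : ∀ τ σ : α ≃ β, τ r ≠ c → σ r = c → ∑ a, w a (τ a) < ∑ a, w a (σ a))
    (hres : HasUniqueOptimalAssignment fun (a : {a // a ≠ r}) (b : {b // b ≠ c}) => w a b) :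
    HasUniqueOptimalAssignment w := by
  obtain ⟨σ', hσ'⟩ := hres
  set σ : α ≃ β :=
    (Equiv.optionSubtypeNe r).symm.trans (σ'.optionCongr.trans (Equiv.optionSubtypeNe c))
  have hσr : σ r = c := by simp [σ]
  have hσ : ∀ a (ha : a ≠ r), σ a = σ' ⟨a, ha⟩ := fun a ha => by
    simp [σ, Equiv.optionSubtypeNe_symm_of_ne ha]
  refine ⟨σ, fun τ hτ => ?_⟩
  by_cases hτr : τ r = c
  · set τ' := τ.subtypeEquiv (p := (· ≠ r)) (q := (· ≠ c))
      fun a => (τ.injective.ne_iff' hτr).symm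
    have hτ' : τ' ≠ σ' := fun h => hτ <| Equiv.ext fun a => by
      by_cases ha : a = r
      · rw [ha, hτr, hσr]
      · rw [hσ a ha, ← h]; rfl
    calc ∑ a, w a (τ a) = w r c + ∑ a : {a // a ≠ r}, w a (τ' a) := by
          rw [Fintype.sum_eq_add_sum_subtype_ne _ r, hτr]; rfl
      _ < w r c + ∑ a : {a // a ≠ r}, w a (σ' a) := add_lt_add_right (hσ' τ' hτ') _
      _ = ∑ a, w a (σ a) := by
          rw [Fintype.sum_eq_add_sum_subtype_ne _ r, hσr]
          congr 1
          exact Fintype.sum_congr _ _ fun a => by rw [hσ a a.2]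
  · exact hgap τ σ hτr hσr

theorem sum_lt_sum_of_row_gap {w : α → β → ℝ} (r : α) (c : β) {D δ : ℝ} (hD : 0 ≤ D)
    (hosc : ∀ a, a ≠ r → ∀ b b', w a b ≤ w a b' + D) (hr : ∀ b, b ≠ c → w r b + δ ≤ w r c)
    (hδ : Fintype.card α * D < δ) (τ σ : α ≃ β) (hτ : τ r ≠ c) (hσ : σ r = c) :
    ∑ a, w a (τ a) < ∑ a, w a (σ a) := by
  have hrest :
      ∑ a : {a // a ≠ r}, w a (τ a) ≤ ∑ a : {a // a ≠ r}, w a (σ a) + Fintype.card α * D :=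
    calc ∑ a : {a // a ≠ r}, w a (τ a) ≤ ∑ a : {a // a ≠ r}, (w a (σ a) + D) :=
          Finset.sum_le_sum fun a _ => hosc a a.2 _ _
      _ = ∑ a : {a // a ≠ r}, w a (σ a) + Fintype.card {a // a ≠ r} * D := by
          rw [Finset.sum_add_distrib, Finset.sum_const, nsmul_eq_mul, Finset.card_univ]
      _ ≤ _ := by gcongr; exact Fintype.card_subtype_le _
  rw [Fintype.sum_eq_add_sum_subtype_ne _ r, Fintype.sum_eq_add_sum_subtype_ne _ r, hσ]
  linarith [hr _ hτ]

end Assignment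

section AppendRow

variable {m n : ℕ}

def Finset.preimageCastSuccEquiv (K : Finset (Fin (m + 1))) :
    K.preimage Fin.castSucc (Fin.castSucc_injective m).injOn ≃ {k : K // k.1 ≠ Fin.last m} where
  toFun i := ⟨⟨i.1.castSucc, mem_preimage.1 i.2⟩, Fin.castSucc_ne_last _⟩
  invFun k := ⟨k.1.1.castPred k.2, by simp⟩
  left_inv i := by simp
  right_inv k := by simp

def Finset.eraseEquivSubtypeNe {β : Type*} [DecidableEq β] (L : Finset β) {j : β} (hj : j ∈ L) :
    L.erase j ≃ {l : L // l ≠ ⟨j, hj⟩} where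
  toFun l := ⟨⟨l.1, mem_of_mem_erase l.2⟩, fun h => ne_of_mem_erase l.2 congr($h.1)⟩
  invFun l := ⟨l.1.1, mem_erase.2 ⟨fun h => l.2 (Subtype.ext h), l.1.2⟩⟩
  left_inv _ := rfl
  right_inv _ := rfl

theorem StronglyNonDegenerate.hasUniqueOptimalAssignment {M : Matrix (Fin m) (Fin n) ℝ}
    (hM : StronglyNonDegenerate M) {K : Finset (Fin m)} {L : Finset (Fin n)}
    (hKL : K.card = L.card) : HasUniqueOptimalAssignment fun (k : K) (l : L) => M k l :=
  hM K L hKL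

theorem StronglyNonDegenerate.of_castSucc {A : Matrix (Fin m) (Fin n) ℝ}
    (hA : StronglyNonDegenerate A) {B : Matrix (Fin (m + 1)) (Fin n) ℝ} {D δ : ℝ}
    (hB : ∀ i j, B i.castSucc j = A i j) (hD : 0 ≤ D) (hosc : ∀ i j j', A i j ≤ A i j' + D)
    (hlast : ∀ j j', j < j' → B (Fin.last m) j' + δ ≤ B (Fin.last m) j) (hδ : n * D < δ) :
    StronglyNonDegenerate B := by
  intro K L hKL
  set K' := K.preimage Fin.castSucc (Fin.castSucc_injective m).injOn
  change HasUniqueOptimalAssignment fun (k : K) (l : L) => B k l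
  by_cases hK : Fin.last m ∈ K
  · have hL : L.Nonempty := card_pos.1 (hKL ▸ card_pos.2 ⟨_, hK⟩)
    set j₀ := L.min' hL
    have hj₀ : j₀ ∈ L := L.min'_mem hL
    set rows : K' ≃ {k : K // k ≠ ⟨_, hK⟩} := (Finset.preimageCastSuccEquiv K).trans
      (Equiv.subtypeEquivRight fun k => by simp [Subtype.ext_iff])
    have hK' : K'.card = (L.erase j₀).card := by
      have : K'.card + 1 = K.card := by
        rw [← Fintype.card_coe, Fintype.card_congr rows, ← Fintype.card_option,
          Fintype.card_congr (Equiv.optionSubtypeNe _), Fintype.card_coe]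
      have := card_erase_add_one hj₀
      omega
    refine .of_subtype_ne ⟨_, hK⟩ ⟨j₀, hj₀⟩
      (sum_lt_sum_of_row_gap (w := fun (k : K) (l : L) => B k l) (δ := δ) _ _ hD ?_ ?_ ?_)
      ((hA.hasUniqueOptimalAssignment hK').of_equiv rows (L.eraseEquivSubtypeNe hj₀)
        fun _ _ => hB _ _)
    · intro k hk j j'
      have hk : k.1 ≠ Fin.last m := fun h => hk (Subtype.ext h)
      rw [← Fin.castSucc_castPred _ hk, hB, hB]
      exact hosc _ _ _
    · intro l hl
      exact hlast _ _ (lt_of_le_of_ne (L.min'_le _ l.2) fun h => hl (Subtype.ext h.symm))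
    · calc Fintype.card K * D ≤ n * D := by
            gcongr
            rw [Fintype.card_coe, hKL]
            simpa using L.card_le_univ
        _ < δ := hδ
  · set rows : K' ≃ K :=
      (Finset.preimageCastSuccEquiv K).trans (Equiv.subtypeUnivEquiv fun k h => hK (h ▸ k.2))
    have hK' : K'.card = L.card := by
      rw [← Fintype.card_coe, Fintype.card_congr rows, Fintype.card_coe, hKL]
    exact (hA.hasUniqueOptimalAssignment hK').of_equiv rows (Equiv.refl _) fun _ _ => hB _ _

end AppendRow

/-- if `A` is strongly non-degenerate and
`ε < n·(min_{i,j} A_{ij} − max_{i,j} A_{ij})`, then the `(m+1) × n` matrix obtained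
from `A` by appending the row `(ε, 2ε, …, nε)` is strongly non-degenerate. -/
theorem stmt10 {m n : ℕ} (A : Matrix (Fin m) (Fin n) ℝ) (ε : ℝ)
    (hA : StronglyNonDegenerate A)
    (hε : ε < n * ((⨅ p : Fin m × Fin n, A p.1 p.2) - ⨆ p : Fin m × Fin n, A p.1 p.2)) :
    StronglyNonDegenerate (Matrix.of (fun (i : Fin (m + 1)) (j : Fin n) =>
      if h : (i : ℕ) < m then A ⟨(i : ℕ), h⟩ j else ((j : ℕ) + 1) * ε)) := by
  set I := ⨅ p : Fin m × Fin n, A p.1 p.2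
  set S := ⨆ p : Fin m × Fin n, A p.1 p.2
  have hfin := Set.finite_range fun p : Fin m × Fin n => A p.1 p.2
  have hAS : ∀ i j, A i j ≤ S := fun i j => le_ciSup hfin.bddAbove (i, j)
  have hIA : ∀ i j, I ≤ A i j := fun i j => ciInf_le hfin.bddBelow (i, j)
  have hIS : I ≤ S := by
    rcases isEmpty_or_nonempty (Fin m × Fin n) with _ | _
    · simp [I, S, Real.iInf_of_isEmpty, Real.iSup_of_isEmpty]
    · exact ciInf_le_ciSup hfin.bddBelow hfin.bddAbove
  have hε_neg : ε < 0 := hε.trans_le (mul_nonpos_of_nonneg_of_nonpos n.cast_nonneg (by linarith))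
  refine hA.of_castSucc (D := S - I) (δ := -ε) (fun i j => by simp) (by linarith)
    (fun i j j' => by linarith [hAS i j, hIA i j']) (fun j j' hjj' => ?_) (by linarith)
  have : (j : ℝ) + 1 ≤ j' := by exact_mod_cast hjj'
  simp only [Matrix.of_apply, Fin.val_last, lt_irrefl, dite_false]
  linarith [mul_le_mul_of_nonpos_right this hε_neg.le]
end

section
/- Work in ℝ∪{−∞} with the usual order and with addition extended by (−∞) + t = t + (−∞) = −∞; the maximum over an empty index set is −∞. Let a, b ∈ (ℝ∪{−∞})^n with a_j ≠ b_j for every j ∈ {1,…,n}, and let x ∈ (ℝ∪{−∞})^n. Then max_{1≤j≤n} (a_j + x_j) ≥ max_{1≤j≤n} (b_j + x_j) holds if and only if max_{j : a_j > b_j} (a_j + x_j) ≥ max_{j : b_j > a_j} (b_j + x_j). -/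
/-! Since `a j ≠ b j`, the indices split into `S = {j | b j < a j}` and `T = {j | a j < b j}`,
and each maximum is the join of its `S`- and `T`-parts. On `S` the `a`-terms dominate the
`b`-terms, so `max_S (b + x)` never matters. On `T` each `a j + x j` is `−∞` or strictly below
`b j + x j`, so `max_T (a + x)` is `−∞` or strictly below `max_T (b + x)`, and can never be what
dominates it. Hence the comparison reduces to `max_S (a + x) ≥ max_T (b + x)`. -/

theorem Finset.sup_lt_sup_of_forall_ne_bot_lt {α ι : Type*} [LinearOrder α] [OrderBot α]
    {s : Finset ι} {f g : ι → α} (h : ∀ i ∈ s, f i ≠ ⊥ → f i < g i) (hf : s.sup f ≠ ⊥) :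
    s.sup f < s.sup g := by
  have hs : s.Nonempty := Finset.nonempty_iff_ne_empty.2 fun hs => hf (by simp [hs])
  obtain ⟨i, hi, hfi⟩ := Finset.exists_mem_eq_sup s hs f
  rw [hfi] at hf ⊢
  exact (h i hi hf).trans_le (Finset.le_sup hi)

theorem sup_le_sup_iff_of_le_of_ne_bot_lt {α : Type*} [LinearOrder α] [OrderBot α]
    {a a' b b' : α} (hb : b ≤ a) (ha' : a' ≠ ⊥ → a' < b') :
    b ⊔ b' ≤ a ⊔ a' ↔ b' ≤ a := by
  refine ⟨fun h => ?_, fun h => sup_le (hb.trans le_sup_left) (h.trans le_sup_left)⟩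
  by_contra! hab'
  have ha'b' : b' ≤ a' := (le_sup_iff.1 (le_sup_right.trans h)).resolve_left hab'.not_ge
  exact (ha' (ne_bot_of_gt (hab'.trans_le ha'b'))).not_ge ha'b'

/-- in `ℝ ∪ {−∞}` (with `−∞ + t = t + (−∞) = −∞`, and the maximum over
an empty index set equal to `−∞`), if `a_j ≠ b_j` for every `j`, then
`max_j (a_j + x_j) ≥ max_j (b_j + x_j)` iff
`max_{j : a_j > b_j} (a_j + x_j) ≥ max_{j : b_j > a_j} (b_j + x_j)`. -/
theorem stmt12 {n : ℕ} (a b x : Fin n → WithBot ℝ) (hab : ∀ j, a j ≠ b j) :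
    Finset.univ.sup (fun j => a j + x j) ≥ Finset.univ.sup (fun j => b j + x j) ↔
    (Finset.univ.filter (fun j => b j < a j)).sup (fun j => a j + x j) ≥
      (Finset.univ.filter (fun j => a j < b j)).sup (fun j => b j + x j) := by
  have hsplit (f : Fin n → WithBot ℝ) : Finset.univ.sup f =
      (Finset.univ.filter (fun j => b j < a j)).sup f ⊔
        (Finset.univ.filter (fun j => a j < b j)).sup f := by
    rw [← Finset.sup_union]
    congr 1
    ext j
    simpa [or_comm] using hab j
  rw [hsplit, hsplit]
  refine sup_le_sup_iff_of_le_of_ne_bot_lt ?_ fun hne => ?_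
  · exact Finset.sup_mono_fun fun j hj => add_le_add_left (Finset.mem_filter.1 hj).2.le _
  · refine Finset.sup_lt_sup_of_forall_ne_bot_lt (fun j hj hj' => ?_) hne
    exact WithBot.add_lt_add_right (WithBot.add_ne_bot.1 hj').2 (Finset.mem_filter.1 hj).2
end

section
/- Let W be an m×n matrix with real entries such that for every pair of subsets K ⊆ {1,…,m}, L ⊆ {1,…,n} with |K| = |L|, the maximum over all bijections σ : K → L of Σ_{k∈K} W_{kσ(k)} is attained at exactly one bijection. Fix subsets K₁, K₂ ⊆ {1,…,m} and L ⊆ {1,…,n} with |K₁| = |K₂| = |L|, and let σ₁* : K₁ → L and σ₂* : K₂ → L be the unique optimal bijections for K₁×L and K₂×L respectively. Consider the polynomial F ∈ ℤ[X_{ij} : 1 ≤ i ≤ m, 1 ≤ j ≤ n] equal to the product of the two minors of the generic matrix (X_{ij}): F = det(X_{K₁×L}) · det(X_{K₂×L}). Then, among the exponent vectors α ∈ ℕ^{m×n} in the support of F, the linear function α ↦ Σ_{i,j} W_{ij}·α_{ij} attains its maximum at exactly one exponent vector, namely the sum of the 0/1 indicator matrices of σ₁* and σ₂*. -/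
/-- The minor `det (X_{K×L})` of the generic `m × n` matrix of variables `(X_{ij})`,
formed by the rows in `K` and the columns in `L`, as a polynomial in `ℤ[X_{ij}]`. -/
noncomputable def genericMinor {m n : ℕ} (K : Finset (Fin m)) (L : Finset (Fin n))
    (h : K.card = L.card) : MvPolynomial (Fin m × Fin n) ℤ :=
  (Matrix.of (fun s t : Fin L.card =>
    MvPolynomial.X (((K.orderIsoOfFin h s : {i // i ∈ K}) : Fin m),
      ((L.orderIsoOfFin rfl t : {j // j ∈ L}) : Fin n)))).det

/-- The indicator matrix (in `ℕ^{m×n}`) of a bijection `σ : K → L`: it is `1` at the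
entries `(k, σ k)` for `k ∈ K` and `0` elsewhere. -/
noncomputable def bijIndicator {m n : ℕ} {K : Finset (Fin m)} {L : Finset (Fin n)}
    (σ : {i // i ∈ K} ≃ {j // j ∈ L}) : (Fin m × Fin n) →₀ ℕ :=
  ∑ k : {i // i ∈ K}, Finsupp.single (k.1, (σ k).1) 1


/-! The support of the generic minor `det X_{K×L}` consists exactly of the indicator matrices of
the bijections `K → L` (each with coefficient `±1`), and the `W`-weight of such an indicator is
the assignment sum of the bijection; so the optimal bijection gives the unique weight-maximising
point of the support. If two polynomials have unique weight-maximising support points `a` and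
`b`, then `a + b` arises in exactly one way as a sum of support points, so its coefficient in the
product is a product of nonzero coefficients and cannot cancel over a domain; every other point
of the support of the product is a sum of lighter points and is strictly lighter. -/

open MvPolynomial Finset
open scoped Pointwise

section UniqueMax

variable {G M : Type*}

def IsUniqueMaxOn [LT M] (w : G → M) (s : Finset G) (a : G) : Prop :=
  a ∈ s ∧ ∀ b ∈ s, b ≠ a → w b < w a

lemma IsUniqueMaxOn.le [Preorder M] {w : G → M} {s : Finset G} {a : G}
    (ha : IsUniqueMaxOn w s a) {b : G} (hb : b ∈ s) : w b ≤ w a := by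
  rcases eq_or_ne b a with rfl | h
  · exact le_rfl
  · exact (ha.2 _ hb h).le

variable [AddCommMonoid G] [AddCommMonoid M] [PartialOrder M] [IsOrderedCancelAddMonoid M]
  {w : G →+ M} {A B : Finset G} {a b : G}

lemma IsUniqueMaxOn.map_add_lt (ha : IsUniqueMaxOn w A a) (hb : IsUniqueMaxOn w B b)
    {a' b' : G} (ha' : a' ∈ A) (hb' : b' ∈ B) (hne : a' ≠ a ∨ b' ≠ b) :
    w a' + w b' < w a + w b := by
  rcases hne with h | h
  · exact add_lt_add_of_lt_of_le (ha.2 _ ha' h) (hb.le hb')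
  · exact add_lt_add_of_le_of_lt (ha.le ha') (hb.2 _ hb' h)

lemma IsUniqueMaxOn.uniqueAdd (ha : IsUniqueMaxOn w A a) (hb : IsUniqueMaxOn w B b) :
    UniqueAdd A B a b := by
  intro a' b' ha' hb' hab
  by_contra hne
  have := ha.map_add_lt hb ha' hb' (not_and_or.mp hne)
  rw [← map_add, ← map_add, hab] at this
  exact lt_irrefl _ this

lemma IsUniqueMaxOn.add [DecidableEq G] (ha : IsUniqueMaxOn w A a) (hb : IsUniqueMaxOn w B b) :
    IsUniqueMaxOn w (A + B) (a + b) := by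
  refine ⟨add_mem_add ha.1 hb.1, ?_⟩
  rintro _ hc hne
  obtain ⟨a', ha', b', hb', rfl⟩ := mem_add.mp hc
  rw [map_add, map_add]
  exact ha.map_add_lt hb ha' hb' (by contrapose! hne; rw [hne.1, hne.2])

end UniqueMax

namespace MvPolynomial

variable {σ R M : Type*} [CommSemiring R]

theorem coeff_mul_add_of_uniqueAdd {p q : MvPolynomial σ R} {a b : σ →₀ ℕ}
    (h : UniqueAdd p.support q.support a b) : coeff (a + b) (p * q) = coeff a p * coeff b q :=
  AddMonoidAlgebra.coeff_mul_add_of_uniqueAdd h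

theorem isUniqueMaxOn_support_mul [NoZeroDivisors R]
    [AddCommMonoid M] [PartialOrder M] [IsOrderedCancelAddMonoid M] {w : (σ →₀ ℕ) →+ M}
    {p q : MvPolynomial σ R} {a b : σ →₀ ℕ} (hp : IsUniqueMaxOn w p.support a) (hq : IsUniqueMaxOn w q.support b) :
    IsUniqueMaxOn w (p * q).support (a + b) := by
  classical
  refine ⟨?_, fun c hc => (hp.add hq).2 c (support_mul p q hc)⟩
  rw [mem_support_iff, coeff_mul_add_of_uniqueAdd (hp.uniqueAdd hq)]
  exact mul_ne_zero (mem_support_iff.mp hp.1) (mem_support_iff.mp hq.1)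

end MvPolynomial

section GenericMinor

variable {m n : ℕ} {K : Finset (Fin m)} {L : Finset (Fin n)}

lemma bijIndicator_apply_mk (τ : K ≃ L) (k : K) (j : L) :
    bijIndicator τ (k.1, j.1) = if τ k = j then 1 else 0 := by
  classical
  have hsingle (k' : K) : Finsupp.single (k'.1, (τ k').1) 1 (k.1, j.1) =
      if k' = k ∧ τ k' = j then 1 else 0 := by
    simp only [Finsupp.single_apply, Prod.mk.injEq, Subtype.val_inj]
  rw [bijIndicator, Finsupp.finsetSum_apply]
  simp [hsingle, ite_and]

lemma bijIndicator_injective : Function.Injective (bijIndicator : (K ≃ L) → _) := by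
  intro τ τ' h
  ext k
  have := bijIndicator_apply_mk τ' k (τ k)
  rw [← h, bijIndicator_apply_mk, if_pos rfl] at this
  simp_all

lemma weight_bijIndicator {M : Type*} [AddCommMonoid M] (w : Fin m × Fin n → M) (τ : K ≃ L) :
    Finsupp.weight w (bijIndicator τ) = ∑ k, w (k.1, (τ k).1) := by
  simp [bijIndicator, Finsupp.weight_single]

lemma genericMinor_eq_sum (h : K.card = L.card) :
    genericMinor K L h = ∑ τ : K ≃ L, monomial (bijIndicator τ)
      ((Equiv.Perm.sign (((K.orderIsoOfFin h).toEquiv.equivCongr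
        (L.orderIsoOfFin rfl).toEquiv).symm τ) : ℤ)) := by
  rw [genericMinor, ← Matrix.det_transpose, Matrix.det_apply,
    ← ((K.orderIsoOfFin h).toEquiv.equivCongr (L.orderIsoOfFin rfl).toEquiv).sum_comp]
  refine Finset.sum_congr rfl fun σ _ => ?_
  rw [Equiv.symm_apply_apply, bijIndicator, monomial_sum_index, Units.smul_def, zsmul_eq_mul]
  simp only [Matrix.transpose_apply, Matrix.of_apply]
  congr 1
  refine Fintype.prod_equiv (K.orderIsoOfFin h).toEquiv _ _ fun i => ?_
  simp [X]

lemma mem_support_genericMinor_iff (h : K.card = L.card) {α : (Fin m × Fin n) →₀ ℕ} :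
    α ∈ (genericMinor K L h).support ↔ ∃ τ : K ≃ L, bijIndicator τ = α := by
  classical
  rw [mem_support_iff, genericMinor_eq_sum, coeff_sum]
  constructor
  · contrapose!
    intro hα
    exact Finset.sum_eq_zero fun τ _ => by rw [coeff_monomial, if_neg (hα τ)]
  · rintro ⟨τ, rfl⟩
    rw [Finset.sum_eq_single τ (fun τ' _ hne => ?_) (by simp), coeff_monomial, if_pos rfl]
    · exact_mod_cast Units.ne_zero _
    · rw [coeff_monomial, if_neg (bijIndicator_injective.ne hne)]

lemma isUniqueMaxOn_support_genericMinor {M : Type*} [AddCommMonoid M] [LT M]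
    (w : Fin m × Fin n → M) (h : K.card = L.card) {σ : K ≃ L}
    (hσ : ∀ τ : K ≃ L, τ ≠ σ → ∑ k, w (k.1, (τ k).1) < ∑ k, w (k.1, (σ k).1)) :
    IsUniqueMaxOn (Finsupp.weight w) (genericMinor K L h).support (bijIndicator σ) := by
  refine ⟨(mem_support_genericMinor_iff h).mpr ⟨σ, rfl⟩, ?_⟩
  rintro _ hα hne
  obtain ⟨τ, rfl⟩ := (mem_support_genericMinor_iff h).mp hα
  rw [weight_bijIndicator, weight_bijIndicator]
  exact hσ τ (by rintro rfl; exact hne rfl)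

end GenericMinor

lemma sum_mul_natCast_eq_weight {ι R : Type*} [Fintype ι] [CommSemiring R] (w : ι → R)
    (α : ι →₀ ℕ) : ∑ i, w i * (α i : R) = Finsupp.weight w α := by
  simp [Finsupp.weight_eq_sum, nsmul_eq_mul, mul_comm]

theorem stmt13_general {m n : ℕ} (W : Matrix (Fin m) (Fin n) ℝ)
    (K₁ K₂ : Finset (Fin m)) (L : Finset (Fin n))
    (h₁ : K₁.card = L.card) (h₂ : K₂.card = L.card)
    (σ₁ : {i // i ∈ K₁} ≃ {j // j ∈ L}) (σ₂ : {i // i ∈ K₂} ≃ {j // j ∈ L})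
    (hσ₁ : ∀ τ : {i // i ∈ K₁} ≃ {j // j ∈ L}, τ ≠ σ₁ →
      ∑ k : {i // i ∈ K₁}, W k.1 (τ k).1 < ∑ k : {i // i ∈ K₁}, W k.1 (σ₁ k).1)
    (hσ₂ : ∀ τ : {i // i ∈ K₂} ≃ {j // j ∈ L}, τ ≠ σ₂ →
      ∑ k : {i // i ∈ K₂}, W k.1 (τ k).1 < ∑ k : {i // i ∈ K₂}, W k.1 (σ₂ k).1) :
    bijIndicator σ₁ + bijIndicator σ₂
        ∈ (genericMinor K₁ L h₁ * genericMinor K₂ L h₂).support ∧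
    ∀ α ∈ (genericMinor K₁ L h₁ * genericMinor K₂ L h₂).support,
      α ≠ bijIndicator σ₁ + bijIndicator σ₂ →
        (∑ p : Fin m × Fin n, W p.1 p.2 * (α p : ℝ)) <
          ∑ p : Fin m × Fin n,
            W p.1 p.2 * ((bijIndicator σ₁ + bijIndicator σ₂) p : ℝ) := by
  simp only [sum_mul_natCast_eq_weight fun p : Fin m × Fin n => W p.1 p.2]
  exact isUniqueMaxOn_support_mul (isUniqueMaxOn_support_genericMinor _ h₁ hσ₁)
    (isUniqueMaxOn_support_genericMinor _ h₂ hσ₂)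

/-- let `W` be strongly non-degenerate, `K₁, K₂, L` equal-cardinality
subsets, `σ₁*, σ₂*` the unique optimal bijections for `K₁ × L` and `K₂ × L`, and
`F = det (X_{K₁×L}) · det (X_{K₂×L})`. Then, over the support of `F`, the linear
function `α ↦ ∑_{i,j} W_{ij} α_{ij}` attains its maximum at exactly one exponent
vector, namely the sum of the indicator matrices of `σ₁*` and `σ₂*`. -/
theorem stmt13 {m n : ℕ} (W : Matrix (Fin m) (Fin n) ℝ)
    (hW : StronglyNonDegenerate W)
    (K₁ K₂ : Finset (Fin m)) (L : Finset (Fin n))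
    (h₁ : K₁.card = L.card) (h₂ : K₂.card = L.card)
    (σ₁ : {i // i ∈ K₁} ≃ {j // j ∈ L}) (σ₂ : {i // i ∈ K₂} ≃ {j // j ∈ L})
    (hσ₁ : ∀ τ : {i // i ∈ K₁} ≃ {j // j ∈ L}, τ ≠ σ₁ →
      ∑ k : {i // i ∈ K₁}, W k.1 (τ k).1 < ∑ k : {i // i ∈ K₁}, W k.1 (σ₁ k).1)
    (hσ₂ : ∀ τ : {i // i ∈ K₂} ≃ {j // j ∈ L}, τ ≠ σ₂ →
      ∑ k : {i // i ∈ K₂}, W k.1 (τ k).1 < ∑ k : {i // i ∈ K₂}, W k.1 (σ₂ k).1) :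
    bijIndicator σ₁ + bijIndicator σ₂
        ∈ (genericMinor K₁ L h₁ * genericMinor K₂ L h₂).support ∧
    ∀ α ∈ (genericMinor K₁ L h₁ * genericMinor K₂ L h₂).support,
      α ≠ bijIndicator σ₁ + bijIndicator σ₂ →
        (∑ p : Fin m × Fin n, W p.1 p.2 * (α p : ℝ)) <
          ∑ p : Fin m × Fin n,
            W p.1 p.2 * ((bijIndicator σ₁ + bijIndicator σ₂) p : ℝ) :=
  stmt13_general W K₁ K₂ L h₁ h₂ σ₁ σ₂ hσ₁ hσ₂
end
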